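/- Standard representation: let ≻ be an admissible ordering and G a standard basis of the difference ideal I. Then every nonzero f ∈ I admits a finite representation f = Σ a_{g,θ} · σ^θ(g), where the sum ranges over finitely many pairs (g, θ) with g ∈ G and θ ∈ Θ, the coefficients a_{g,θ} ∈ R are nonzero, and for every summand lm(a_{g,θ} · σ^θ(g)) ≼ lm(f). -/

import Mathlib

/-!
Admissible orderings are well-founded: words of variables are well-quasi-ordered by Higman's
lemma, since the ranking makes `(θ, α) ↦ (θ + d, α)` increasing and `Fin n → ℕ` is
well-quasi-ordered (Dickson), and admissibility turns embedding of words into `≼` of monomials.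
The representation is then produced by division. As `G` is a standard basis, the leading
term of `f ∈ I` is that of some `c X^t σ^θ(g)` with `g ∈ G`, all of whose monomials are `≼ lm(f)`;
subtracting it leaves an element of `I` with smaller leading monomial. Summands with the same
`(g, θ)` are merged along the way, and the ones that vanish are dropped at the end.
-/

/-- The free commutative monoid of shifts `Θ`. -/
abbrev Shift (n : ℕ) := Fin n → ℕ

/-- The set of difference variables `V = Θ × Fin m`. -/
abbrev DVar (n m : ℕ) := (Fin n → ℕ) × Fin m

/-- The additive commutative monoid of difference monomials `M = V →₀ ℕ`. -/
abbrev DMon (n m : ℕ) := DVar n m →₀ ℕ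

/-- Action of a shift `θ` on a difference variable: `θ • (θ', α) = (θ + θ', α)`. -/
def shiftV {n m : ℕ} (θ : Shift n) (v : DVar n m) : DVar n m := (θ + v.1, v.2)

/-- Action of a shift `θ` on a difference monomial. -/
noncomputable def shiftM {n m : ℕ} (θ : Shift n) (w : DMon n m) : DMon n m :=
  Finsupp.mapDomain (shiftV θ) w

/-- Divisibility of difference monomials: `v ∣ w` iff `w = t + θ • v`. -/
def MDvd {n m : ℕ} (v w : DMon n m) : Prop :=
  ∃ (t : DMon n m) (θ : Shift n), w = t + shiftM θ v

/-- The action of the shift `θ` on the difference polynomial ring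
`R = MvPolynomial (DVar n m) K`: the ring endomorphism `σ^θ` applying the given
endomorphism `σK θ` of `K` to coefficients and `θ • ·` to variables. -/
noncomputable def sigmaR {n m : ℕ} {K : Type} [Field K] (σK : Shift n → (K →+* K))
    (θ : Shift n) :
    MvPolynomial (DVar n m) K →+* MvPolynomial (DVar n m) K :=
  MvPolynomial.eval₂Hom (MvPolynomial.C.comp (σK θ)) fun v => MvPolynomial.X (shiftV θ v)

/-- An admissible ordering on difference monomials: a (strict) linear order `lt` such that
`m ≻ 0` for `m ≠ 0`, compatible with addition of monomials and the action of shifts,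
and extending a ranking on the variables. -/
structure Admissible (n m : ℕ) where
  lt : DMon n m → DMon n m → Prop
  irrefl : ∀ a, ¬ lt a a
  trans : ∀ a b c, lt a b → lt b c → lt a c
  trichotomy : ∀ a b, lt a b ∨ a = b ∨ lt b a
  pos : ∀ a : DMon n m, a ≠ 0 → lt 0 a
  compat : ∀ (v w t : DMon n m) (θ : Shift n), lt v w ↔ lt (t + shiftM θ v) (t + shiftM θ w)
  ranking : ∀ (θ : Shift n) (i : Fin n) (α : Fin m),
    lt (Finsupp.single (θ, α) 1) (Finsupp.single (θ + Pi.single i 1, α) 1)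

/-- `w` is the leading monomial of `f` w.r.t. the ordering `ord`:
it occurs in `f` and is `ord`-greater than any other monomial of `f`. -/
def IsLm {n m : ℕ} {K : Type} [Field K] (ord : Admissible n m)
    (f : MvPolynomial (DVar n m) K) (w : DMon n m) : Prop :=
  w ∈ f.support ∧ ∀ w' ∈ f.support, w' ≠ w → ord.lt w' w

/-- `f` is monic: its leading coefficient equals `1`. -/
def IsMonicP {n m : ℕ} {K : Type} [Field K] (ord : Admissible n m)
    (f : MvPolynomial (DVar n m) K) : Prop :=
  ∃ w, IsLm ord f w ∧ f.coeff w = 1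

/-- Elementary reduction step modulo the set `F`: for some `q ∈ F` with leading monomial
`lq`, and a monomial `w = t + θ • lq` occurring in `p` with coefficient `c`, subtract
`c · X^t · σ^θ(q)` from `p`, thereby removing the monomial `w`. -/
def RedStep {n m : ℕ} {K : Type} [Field K] (σK : Shift n → (K →+* K)) (ord : Admissible n m)
    (F : Set (MvPolynomial (DVar n m) K)) (p r : MvPolynomial (DVar n m) K) : Prop :=
  ∃ q ∈ F, ∃ lq, IsLm ord q lq ∧ ∃ (t : DMon n m) (θ : Shift n),
    (t + shiftM θ lq) ∈ p.support ∧
    r = p - MvPolynomial.monomial t (p.coeff (t + shiftM θ lq)) * sigmaR σK θ q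

/-- `r` is in normal form modulo `F`: no monomial of `r` is divisible by the
leading monomial of any element of `F`. -/
def InNormalForm {n m : ℕ} {K : Type} [Field K] (ord : Admissible n m)
    (F : Set (MvPolynomial (DVar n m) K)) (r : MvPolynomial (DVar n m) K) : Prop :=
  ∀ w ∈ r.support, ¬ ∃ q ∈ F, ∃ lq, IsLm ord q lq ∧ MDvd lq w

/-- `r` is a normal form of `p` modulo `G`: `r` is reached from `p` by finitely many
elementary reduction steps modulo elements of `G` and `r` is in normal form modulo `G`. -/
def IsNormalFormOf {n m : ℕ} {K : Type} [Field K] (σK : Shift n → (K →+* K))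
    (ord : Admissible n m) (G : Set (MvPolynomial (DVar n m) K))
    (p r : MvPolynomial (DVar n m) K) : Prop :=
  Relation.ReflTransGen (RedStep σK ord G) p r ∧ InNormalForm ord G r

/-- The smallest difference ideal `[F]` containing `F`: the ideal generated by
all shifts `σ^θ f` of elements `f ∈ F`. -/
noncomputable def diffIdealS {n m : ℕ} {K : Type} [Field K] (σK : Shift n → (K →+* K))
    (F : Set (MvPolynomial (DVar n m) K)) : Ideal (MvPolynomial (DVar n m) K) :=
  Ideal.span { g | ∃ (θ : Shift n) (f : MvPolynomial (DVar n m) K), f ∈ F ∧ g = sigmaR σK θ f }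

/-- An ideal `I ⊆ R` is a difference ideal if it is stable under all shifts `σ^θ`. -/
def IsDiffIdeal {n m : ℕ} {K : Type} [Field K] (σK : Shift n → (K →+* K))
    (I : Ideal (MvPolynomial (DVar n m) K)) : Prop :=
  ∀ (θ : Shift n), ∀ f ∈ I, sigmaR σK θ f ∈ I

/-- `s` is an S-polynomial associated to the monic nonzero polynomials `p` and `q`:
`s = X^{t₁} · σ^{θ₁}(p) − X^{t₂} · σ^{θ₂}(q)` where `t₁ + θ₁ • lm(p) = t₂ + θ₂ • lm(q)`
and this common monomial is minimal with respect to divisibility among all common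
multiples of `lm(p)` and `lm(q)` of this form. -/
def IsSPoly {n m : ℕ} {K : Type} [Field K] (σK : Shift n → (K →+* K)) (ord : Admissible n m)
    (p q s : MvPolynomial (DVar n m) K) : Prop :=
  ∃ lp lq, IsLm ord p lp ∧ IsLm ord q lq ∧
    ∃ (t₁ : DMon n m) (θ₁ : Shift n) (t₂ : DMon n m) (θ₂ : Shift n),
      t₁ + shiftM θ₁ lp = t₂ + shiftM θ₂ lq ∧
      (∀ (t₁' : DMon n m) (θ₁' : Shift n) (t₂' : DMon n m) (θ₂' : Shift n),
        t₁' + shiftM θ₁' lp = t₂' + shiftM θ₂' lq →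
        MDvd (t₁' + shiftM θ₁' lp) (t₁ + shiftM θ₁ lp) →
        t₁' + shiftM θ₁' lp = t₁ + shiftM θ₁ lp) ∧
      s = MvPolynomial.monomial t₁ (1 : K) * sigmaR σK θ₁ p
          - MvPolynomial.monomial t₂ (1 : K) * sigmaR σK θ₂ q

/-- `G` is a (difference) standard basis of the ideal `I`: `[G] = I` and the leading
monomial of every nonzero element of `I` is divisible by the leading monomial of
some element of `G`. -/
def IsStandardBasis {n m : ℕ} {K : Type} [Field K] (σK : Shift n → (K →+* K))
    (ord : Admissible n m) (G : Set (MvPolynomial (DVar n m) K))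
    (I : Ideal (MvPolynomial (DVar n m) K)) : Prop :=
  diffIdealS σK G = I ∧
  ∀ f ∈ I, f ≠ 0 → ∃ g ∈ G, ∃ lg lf, IsLm ord g lg ∧ IsLm ord f lf ∧ MDvd lg lf

open MvPolynomial

section

variable {n m : ℕ}

theorem shiftM_zero (w : DMon n m) : shiftM 0 w = w := by
  have h : shiftV (0 : Shift n) = (id : DVar n m → DVar n m) := funext fun v => by simp [shiftV]
  rw [shiftM, h, Finsupp.mapDomain_id]

theorem shiftV_injective (θ : Shift n) : Function.Injective (shiftV (m := m) θ) :=
  fun _ _ h => Prod.ext (add_left_cancel (Prod.ext_iff.1 h).1) (Prod.ext_iff.1 h).2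

namespace Admissible

variable (ord : Admissible n m)

def le (a b : DMon n m) : Prop := a = b ∨ ord.lt a b

theorem le_refl (a : DMon n m) : ord.le a a := Or.inl rfl

theorem le_of_lt {a b : DMon n m} (h : ord.lt a b) : ord.le a b := Or.inr h

theorem le_trans {a b c : DMon n m} : ord.le a b → ord.le b c → ord.le a c
  | Or.inl rfl, h => h
  | Or.inr h, Or.inl rfl => Or.inr h
  | Or.inr h, Or.inr h' => Or.inr (ord.trans _ _ _ h h')

theorem lt_of_lt_of_le {a b c : DMon n m} (h : ord.lt a b) (h' : ord.le b c) : ord.lt a c := by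
  rcases h' with rfl | h'
  exacts [h, ord.trans _ _ _ h h']

theorem not_le_of_lt {a b : DMon n m} (h : ord.lt a b) : ¬ ord.le b a :=
  fun h' => ord.irrefl a (ord.lt_of_lt_of_le h h')

instance : IsPreorder (DMon n m) ord.le where
  refl := ord.le_refl
  trans _ _ _ := ord.le_trans

theorem add_lt_add_left {v w : DMon n m} (t : DMon n m) (h : ord.lt v w) :
    ord.lt (t + v) (t + w) := by
  simpa only [shiftM_zero] using (ord.compat v w t 0).1 h

theorem shiftM_lt_shiftM {v w : DMon n m} (θ : Shift n) (h : ord.lt v w) :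
    ord.lt (shiftM θ v) (shiftM θ w) := by
  simpa only [zero_add] using (ord.compat v w 0 θ).1 h

theorem add_le_add {a b c d : DMon n m} (h₁ : ord.le a b) (h₂ : ord.le c d) :
    ord.le (a + c) (b + d) := by
  refine ord.le_trans (b := b + c) ?_ ?_
  · rcases h₁ with rfl | h₁
    · exact ord.le_refl _
    · simpa only [add_comm _ c] using ord.le_of_lt (ord.add_lt_add_left c h₁)
  · rcases h₂ with rfl | h₂
    exacts [ord.le_refl _, ord.le_of_lt (ord.add_lt_add_left b h₂)]

theorem zero_le (a : DMon n m) : ord.le 0 a := by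
  rcases eq_or_ne a 0 with rfl | h
  exacts [ord.le_refl 0, ord.le_of_lt (ord.pos a h)]

def varLE (v w : DVar n m) : Prop := ord.le (Finsupp.single v 1) (Finsupp.single w 1)

instance : IsPreorder (DVar n m) ord.varLE where
  refl _ := ord.le_refl _
  trans _ _ _ := ord.le_trans

theorem varLE_add_shift (θ d : Shift n) (α : Fin m) : ord.varLE (θ, α) (θ + d, α) := by
  let P : Shift n → Prop := fun d => ∀ θ, ord.varLE (θ, α) (θ + d, α)
  have hadd : ∀ a b, P a → P b → P (a + b) := fun a b ha hb θ => by
    have h := ord.le_trans (ha θ) (hb (θ + a))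
    rwa [add_assoc] at h
  have hzero : P 0 := fun θ => by
    rw [add_zero]
    exact ord.le_refl _
  have hsingle : ∀ i k, P (Pi.single i k) := by
    intro i k
    induction k with
    | zero => simpa only [Pi.single_zero] using hzero
    | succ k ih =>
      rw [Pi.single_add]
      exact hadd _ _ ih fun θ => ord.le_of_lt (ord.ranking θ i α)
  rw [← Finset.univ_sum_single d]
  exact Finset.sum_induction _ P hadd hzero (fun i _ => hsingle i (d i)) θ

theorem wellQuasiOrdered_varLE : WellQuasiOrdered ord.varLE := by
  intro f
  obtain ⟨i, j, hij, hle, hα⟩ :=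
    (wellQuasiOrdered_le (α := Shift n)).prod (Finite.wellQuasiOrdered (α := Fin m) Eq) f
  obtain ⟨d, hd⟩ := exists_add_of_le hle
  have hj : f j = ((f i).1 + d, (f i).2) := Prod.ext hd hα.symm
  refine ⟨i, j, hij, ?_⟩
  rw [hj]
  exact ord.varLE_add_shift (f i).1 d (f i).2

theorem le_toFinsupp_of_sublistForall₂ {l l' : List (DVar n m)}
    (h : List.SublistForall₂ ord.varLE l l') :
    ord.le (Multiset.toFinsupp l) (Multiset.toFinsupp l') := by
  induction h with
  | nil => exact ord.zero_le _
  | cons hab _ ih =>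
    simpa only [← Multiset.cons_coe, ← Multiset.singleton_add, Multiset.toFinsupp_add,
      Multiset.toFinsupp_singleton] using ord.add_le_add hab ih
  | cons_right _ ih =>
    simpa only [← Multiset.cons_coe, ← Multiset.singleton_add, Multiset.toFinsupp_add,
      Multiset.toFinsupp_singleton, zero_add] using ord.add_le_add (ord.zero_le _) ih

theorem wellQuasiOrdered_le : WellQuasiOrdered ord.le := by
  intro f
  have higman := (Set.partiallyWellOrderedOn_univ_iff.2
    ord.wellQuasiOrdered_varLE).partiallyWellOrderedOn_sublistForall₂
  obtain ⟨i, j, hij, hsub⟩ :=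
    higman.exists_lt (f := fun k => (Finsupp.toMultiset (f k)).toList) fun _ _ _ => trivial
  refine ⟨i, j, hij, ?_⟩
  simpa only [Multiset.coe_toList, Finsupp.toMultiset_toFinsupp] using
    ord.le_toFinsupp_of_sublistForall₂ hsub

theorem wellFounded : WellFounded ord.lt :=
  ord.wellQuasiOrdered_le.wellFounded.mono fun _ _ h => ⟨ord.le_of_lt h, ord.not_le_of_lt h⟩

end Admissible

section Polynomial

variable {K : Type} [Field K] {ord : Admissible n m} {f g p q : MvPolynomial (DVar n m) K}
  {w : DMon n m}

theorem sigmaR_eq_rename_map (σK : Shift n → (K →+* K)) (θ : Shift n)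
    (p : MvPolynomial (DVar n m) K) :
    sigmaR σK θ p = rename (shiftV θ) (map (σK θ) p) := by
  suffices h : sigmaR σK θ = (rename (shiftV θ)).toRingHom.comp (map (σK θ)) from
    RingHom.congr_fun h p
  exact ringHom_ext (fun r => by simp [sigmaR]) (fun v => by simp [sigmaR])

theorem support_sigmaR (σK : Shift n → (K →+* K)) (θ : Shift n) (p : MvPolynomial (DVar n m) K) :
    (sigmaR σK θ p).support = p.support.image (shiftM θ) := by
  classical
  rw [sigmaR_eq_rename_map, support_rename_of_injective (shiftV_injective θ),
    support_map_of_injective _ (σK θ).injective]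
  rfl

theorem coeff_sigmaR_shiftM (σK : Shift n → (K →+* K)) (θ : Shift n)
    (p : MvPolynomial (DVar n m) K) (w : DMon n m) :
    (sigmaR σK θ p).coeff (shiftM θ w) = σK θ (p.coeff w) := by
  rw [sigmaR_eq_rename_map, shiftM, coeff_rename_mapDomain _ (shiftV_injective θ), coeff_map]

theorem support_monomial_mul_subset (t : DMon n m) (c : K) (p : MvPolynomial (DVar n m) K) :
    (monomial t c * p).support ⊆ p.support.image (t + ·) := by
  intro u hu
  rw [mem_support_iff, coeff_monomial_mul'] at hu
  split_ifs at hu with htu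
  · exact Finset.mem_image.2 ⟨u - t, mem_support_iff.2 (right_ne_zero_of_mul (a := c) hu),
      add_tsub_cancel_of_le htu⟩
  · exact absurd rfl hu

theorem IsLm.ne_zero (h : IsLm ord f w) : f ≠ 0 := by
  rintro rfl
  simpa using h.1

theorem IsLm.unique {w' : DMon n m} (h : IsLm ord f w) (h' : IsLm ord f w') : w = w' := by
  by_contra hne
  exact ord.irrefl w (ord.trans _ _ _ (h'.2 w h.1 hne) (h.2 w' h'.1 (Ne.symm hne)))

theorem IsLm.le_of_mem_support {u : DMon n m} (h : IsLm ord f w) (hu : u ∈ f.support) :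
    ord.le u w := by
  rcases eq_or_ne u w with rfl | hne
  exacts [ord.le_refl u, ord.le_of_lt (h.2 u hu hne)]

theorem exists_isLm (ord : Admissible n m) (hf : f ≠ 0) : ∃ w, IsLm ord f w := by
  have : IsStrictOrder (DMon n m) (fun a b => ord.lt b a) :=
    { irrefl := ord.irrefl, trans := fun _ _ _ hab hbc => ord.trans _ _ _ hbc hab }
  obtain ⟨w₀, hw₀⟩ := support_nonempty.2 hf
  obtain ⟨⟨w, hw⟩, -, hmax⟩ := (f.support.finite_toSet.wellFoundedOn
    (r := fun a b => ord.lt b a)).has_min Set.univ ⟨⟨w₀, hw₀⟩, trivial⟩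
  refine ⟨w, hw, fun u hu hne => ?_⟩
  rcases ord.trichotomy u w with h | h | h
  exacts [h, absurd h hne, absurd h (hmax ⟨u, hu⟩ trivial)]

theorem IsLm.of_support_subset_image {φ : DMon n m → DMon n m} (h : IsLm ord p w)
    (hφ : ∀ a b, ord.lt a b → ord.lt (φ a) (φ b)) (hw : φ w ∈ q.support)
    (hq : q.support ⊆ p.support.image φ) : IsLm ord q (φ w) := by
  refine ⟨hw, fun u hu hne => ?_⟩
  obtain ⟨v, hv, rfl⟩ := Finset.mem_image.1 (hq hu)
  exact hφ v w (h.2 v hv fun e => hne (e ▸ rfl))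

theorem IsLm.monomial_mul (h : IsLm ord p w) (t : DMon n m) {c : K} (hc : c ≠ 0) :
    IsLm ord (monomial t c * p) (t + w) :=
  h.of_support_subset_image (fun _ _ => ord.add_lt_add_left t)
    (by rw [mem_support_iff, coeff_monomial_mul]; exact mul_ne_zero hc (mem_support_iff.1 h.1))
    (support_monomial_mul_subset t c p)

theorem IsLm.map_sigmaR (h : IsLm ord p w) (σK : Shift n → (K →+* K)) (θ : Shift n) :
    IsLm ord (sigmaR σK θ p) (shiftM θ w) :=
  h.of_support_subset_image (fun _ _ => ord.shiftM_lt_shiftM θ)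
    (by rw [support_sigmaR]; exact Finset.mem_image_of_mem _ h.1) (support_sigmaR σK θ p).le

theorem IsLm.lt_of_mem_support_sub {u : DMon n m} (hf : IsLm ord f w) (hg : IsLm ord g w)
    (hc : f.coeff w = g.coeff w) (hu : u ∈ (f - g).support) : ord.lt u w := by
  have hne : u ≠ w := by
    rintro rfl
    exact mem_support_iff.1 hu (by rw [coeff_sub, hc, sub_self])
  classical
  rcases Finset.mem_union.1 (support_sub _ f g hu) with hu | hu
  exacts [hf.2 u hu hne, hg.2 u hu hne]

theorem IsLm.exists_monomial_mul_sigmaR_cancel (σK : Shift n → (K →+* K)) {lg t : DMon n m}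
    {θ : Shift n} (hg : IsLm ord g lg) (hf : IsLm ord f (t + shiftM θ lg)) :
    ∃ c : K, IsLm ord (monomial t c * sigmaR σK θ g) (t + shiftM θ lg) ∧
      ∀ u ∈ (f - monomial t c * sigmaR σK θ g).support, ord.lt u (t + shiftM θ lg) := by
  have hlc : σK θ (g.coeff lg) ≠ 0 := (map_ne_zero _).2 (mem_support_iff.1 hg.1)
  have hc : f.coeff (t + shiftM θ lg) / σK θ (g.coeff lg) ≠ 0 :=
    div_ne_zero (mem_support_iff.1 hf.1) hlc
  have hlm := (hg.map_sigmaR σK θ).monomial_mul t hc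
  refine ⟨_, hlm, fun u hu => hf.lt_of_mem_support_sub hlm ?_ hu⟩
  rw [coeff_monomial_mul, coeff_sigmaR_shiftM, div_mul_cancel₀ _ hlc]

end Polynomial

section Representation

variable {K : Type} [Field K] (σK : Shift n → (K →+* K)) (ord : Admissible n m)
  (G : Set (MvPolynomial (DVar n m) K))

/-- A standard representation with zero coefficients allowed; unlike standard representations,
these are closed under addition. -/
def IsBoundedRep (L : DMon n m) (f : MvPolynomial (DVar n m) K) : Prop :=
  ∃ a : MvPolynomial (DVar n m) K × Shift n →₀ MvPolynomial (DVar n m) K,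
    (∀ x ∈ a.support, x.1 ∈ G) ∧
    (∀ x, ∀ u ∈ (a x * sigmaR σK x.2 x.1).support, ord.le u L) ∧
    f = a.sum fun x c => c * sigmaR σK x.2 x.1

variable {σK ord G} {L : DMon n m} {f g : MvPolynomial (DVar n m) K}

theorem isBoundedRep_zero (L : DMon n m) : IsBoundedRep σK ord G L 0 :=
  ⟨0, by simp, by simp, by simp⟩

theorem isBoundedRep_mul_sigmaR (hg : g ∈ G) (θ : Shift n) (b : MvPolynomial (DVar n m) K)
    (hb : ∀ u ∈ (b * sigmaR σK θ g).support, ord.le u L) :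
    IsBoundedRep σK ord G L (b * sigmaR σK θ g) := by
  classical
  refine ⟨Finsupp.single (g, θ) b, fun x hx => ?_, fun x u hu => ?_, ?_⟩
  · rw [(Finsupp.mem_support_single _ _ _).1 hx |>.1]
    exact hg
  · rcases eq_or_ne x (g, θ) with rfl | hne
    · rw [Finsupp.single_eq_same] at hu
      exact hb u hu
    · simp [Finsupp.single_eq_of_ne hne] at hu
  · rw [Finsupp.sum_single_index (zero_mul _)]

theorem IsBoundedRep.add (hf : IsBoundedRep σK ord G L f) (hg : IsBoundedRep σK ord G L g) :
    IsBoundedRep σK ord G L (f + g) := by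
  classical
  obtain ⟨a, haG, haL, rfl⟩ := hf
  obtain ⟨b, hbG, hbL, rfl⟩ := hg
  refine ⟨a + b, fun x hx => ?_, fun x u hu => ?_, ?_⟩
  · rcases Finset.mem_union.1 (Finsupp.support_add hx) with hx | hx
    exacts [haG x hx, hbG x hx]
  · rw [Finsupp.add_apply, add_mul] at hu
    rcases Finset.mem_union.1 (support_add hu) with hu | hu
    exacts [haL x u hu, hbL x u hu]
  · rw [Finsupp.sum_add_index' (fun _ => zero_mul _) (fun _ _ _ => add_mul _ _ _)]

theorem IsBoundedRep.exists_standard (h : IsBoundedRep σK ord G L f) :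
    ∃ (s : Finset (MvPolynomial (DVar n m) K × Shift n))
      (a : MvPolynomial (DVar n m) K × Shift n → MvPolynomial (DVar n m) K),
      (∀ x ∈ s, x.1 ∈ G ∧ a x ≠ 0 ∧
        ∃ l, IsLm ord (a x * sigmaR σK x.2 x.1) l ∧ (l = L ∨ ord.lt l L)) ∧
      f = ∑ x ∈ s, a x * sigmaR σK x.2 x.1 := by
  classical
  obtain ⟨a, haG, haL, rfl⟩ := h
  refine ⟨a.support.filter fun x => a x * sigmaR σK x.2 x.1 ≠ 0, a, fun x hx => ?_,
    (Finset.sum_filter_ne_zero _).symm⟩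
  obtain ⟨hxa, hx0⟩ := Finset.mem_filter.1 hx
  obtain ⟨l, hl⟩ := exists_isLm ord hx0
  exact ⟨haG x hxa, left_ne_zero_of_mul hx0, l, hl, haL x l hl.1⟩

theorem isBoundedRep_of_isLm {I : Ideal (MvPolynomial (DVar n m) K)} (hI : IsDiffIdeal σK I)
    (hGI : G ⊆ I) (hSB : IsStandardBasis σK ord G I) (w : DMon n m) :
    ∀ f ∈ I, IsLm ord f w → ord.le w L → IsBoundedRep σK ord G L f := by
  induction w using ord.wellFounded.induction with
  | _ w ih =>
  intro f hfI hf hwL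
  obtain ⟨g, hgG, lg, w', hg, hf', t, θ, rfl⟩ := hSB.2 f hfI hf.ne_zero
  obtain rfl := hf.unique hf'
  obtain ⟨c, hlm, hlt⟩ := hg.exists_monomial_mul_sigmaR_cancel σK hf
  set h := monomial t c * sigmaR σK θ g
  have hhI : h ∈ I := I.mul_mem_left _ (hI θ g (hGI hgG))
  have hrep : IsBoundedRep σK ord G L h :=
    isBoundedRep_mul_sigmaR hgG θ _ fun u hu => ord.le_trans (hlm.le_of_mem_support hu) hwL
  have hrest : IsBoundedRep σK ord G L (f - h) := by
    rcases eq_or_ne (f - h) 0 with hr | hr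
    · rw [hr]
      exact isBoundedRep_zero L
    · obtain ⟨w', hw'⟩ := exists_isLm ord hr
      have hlt' := hlt w' hw'.1
      exact ih w' hlt' _ (I.sub_mem hfI hhI) hw' (ord.le_trans (ord.le_of_lt hlt') hwL)
  simpa using hrest.add hrep

end Representation

end

theorem standard_representation_general (n m : ℕ)
    (K : Type) [Field K] (σK : Shift n → (K →+* K))
    (ord : Admissible n m)
    (I : Ideal (MvPolynomial (DVar n m) K)) (hI : IsDiffIdeal σK I)
    (G : Set (MvPolynomial (DVar n m) K))
    (hGI : G ⊆ (I : Set (MvPolynomial (DVar n m) K)))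
    (hSB : IsStandardBasis σK ord G I) :
    ∀ f ∈ I, f ≠ 0 →
      ∃ (s : Finset (MvPolynomial (DVar n m) K × Shift n))
        (a : MvPolynomial (DVar n m) K × Shift n → MvPolynomial (DVar n m) K)
        (lf : DMon n m),
        IsLm ord f lf ∧
        (∀ x ∈ s, x.1 ∈ G ∧ a x ≠ 0 ∧
          ∃ l, IsLm ord (a x * sigmaR σK x.2 x.1) l ∧ (l = lf ∨ ord.lt l lf)) ∧
        f = ∑ x ∈ s, a x * sigmaR σK x.2 x.1 := by
  intro f hfI hf
  obtain ⟨lf, hlf⟩ := exists_isLm ord hf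
  obtain ⟨s, a, hs, hsum⟩ :=
    (isBoundedRep_of_isLm hI hGI hSB lf f hfI hlf (ord.le_refl lf)).exists_standard
  exact ⟨s, a, lf, hlf, hs, hsum⟩

/-- Standard representation: if `G` is a standard basis of the difference ideal `I`
w.r.t. an admissible ordering, then every nonzero `f ∈ I` admits a finite representation
`f = Σ a_{g,θ} · σ^θ(g)` with `g ∈ G`, nonzero coefficients `a_{g,θ} ∈ R`, and
`lm(a_{g,θ} · σ^θ(g)) ≼ lm(f)` for every summand. -/
theorem standard_representation (n m : ℕ) (hn : 1 ≤ n) (hm : 1 ≤ m)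
    (K : Type) [Field K] (σK : Shift n → (K →+* K))
    (hσ0 : σK 0 = RingHom.id K)
    (hσadd : ∀ a b : Shift n, σK (a + b) = (σK a).comp (σK b))
    (ord : Admissible n m)
    (I : Ideal (MvPolynomial (DVar n m) K)) (hI : IsDiffIdeal σK I)
    (G : Set (MvPolynomial (DVar n m) K))
    (hGI : G ⊆ (I : Set (MvPolynomial (DVar n m) K)))
    (hG : ∀ g ∈ G, g ≠ 0 ∧ IsMonicP ord g)
    (hSB : IsStandardBasis σK ord G I) :
    ∀ f ∈ I, f ≠ 0 →
      ∃ (s : Finset (MvPolynomial (DVar n m) K × Shift n))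
        (a : MvPolynomial (DVar n m) K × Shift n → MvPolynomial (DVar n m) K)
        (lf : DMon n m),
        IsLm ord f lf ∧
        (∀ x ∈ s, x.1 ∈ G ∧ a x ≠ 0 ∧
          ∃ l, IsLm ord (a x * sigmaR σK x.2 x.1) l ∧ (l = lf ∨ ord.lt l lf)) ∧
        f = ∑ x ∈ s, a x * sigmaR σK x.2 x.1 :=
  standard_representation_general n m K σK ord I hI G hGI hSB
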